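/- Nonlinear Gronwall lemma: let y : [t₀, T] → [0,∞) be C¹ with y(t₀) ≤ A and y'(t) ≤ A t^{-2} + B t^{-2} y(t) + t^{-2} y(t)^2 for all t ∈ [t₀,T], where t₀ ≥ 1, A, B ≥ 0. Then there exists a constant C = C(B) (independent of A, T) such that if A ≤ 1/(4C), then y(t) ≤ C A for all t ∈ [t₀, T]. -/

import Mathlib

set_option maxHeartbeats 2000000 in
/-- Nonlinear (Riccati-type) Gronwall lemma: if `y ≥ 0` is `C¹` on `[t₀,T]`,
`y(t₀) ≤ A` and `y' ≤ A t⁻² + B t⁻² y + t⁻² y²`, then there is `C = C(B)`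
(independent of `A, T`) such that `A ≤ 1/(4C)` implies `y(t) ≤ C A` on `[t₀,T]`. -/
theorem stmt7 (B : ℝ) (hB : 0 ≤ B) :
    ∃ C : ℝ, 0 < C ∧
      ∀ (A t₀ T : ℝ) (y : ℝ → ℝ),
        1 ≤ t₀ → t₀ ≤ T → 0 ≤ A →
        ContDiffOn ℝ 1 y (Set.Icc t₀ T) →
        (∀ t ∈ Set.Icc t₀ T, 0 ≤ y t) →
        y t₀ ≤ A →
        (∀ t ∈ Set.Icc t₀ T,
          deriv y t ≤ A / t ^ 2 + B / t ^ 2 * y t + (y t) ^ 2 / t ^ 2) →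
        A ≤ 1 / (4 * C) →
        ∀ t ∈ Set.Icc t₀ T, y t ≤ C * A := by
  have hEpos : (0:ℝ) < Real.exp (B + 1) := Real.exp_pos _
  refine ⟨3 * Real.exp (B + 1), by positivity, ?_⟩
  intro A t₀ T y ht₀ htT hA hy hypos hy0 hy' hsmall
  have ht₀0 : (0:ℝ) < t₀ := by linarith
  have hdiff : DifferentiableOn ℝ y (Set.Icc t₀ T) := hy.differentiableOn one_ne_zero
  -- Key barrier estimate, for each small ε > 0
  have key : ∀ ε : ℝ, 0 < ε → ε ≤ 1 / (4 * (3 * Real.exp (B + 1))) →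
      ∀ t ∈ Set.Icc t₀ T, y t ≤ 2 * (A + ε) * Real.exp (B + 1) := by
    intro ε hε hεle
    set A' := A + ε with hA'def
    have hA'pos : 0 < A' := by positivity
    have hAlt : A < A' := by simp [hA'def]; linarith
    have hA'le : A' ≤ 1 / (6 * Real.exp (B + 1)) := by
      have h1 : 1 / (4 * (3 * Real.exp (B + 1))) + 1 / (4 * (3 * Real.exp (B + 1)))
          ≤ 1 / (6 * Real.exp (B + 1)) := by
        rw [← add_div, div_le_div_iff₀ (by positivity) (by positivity)]
        nlinarith
      calc A' = A + ε := hA'def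
        _ ≤ 1 / (4 * (3 * Real.exp (B + 1))) + 1 / (4 * (3 * Real.exp (B + 1))) :=
            add_le_add hsmall hεle
        _ ≤ _ := h1
    set φ : ℝ → ℝ := fun t => 2 * A' * Real.exp ((B+1) * t₀⁻¹ - (B+1) * t⁻¹) - A' with hφdef
    have hφd : ∀ x : ℝ, 0 < x →
        HasDerivAt φ (2 * A' * Real.exp ((B+1) * t₀⁻¹ - (B+1) * x⁻¹) * ((B+1) / x ^ 2)) x := by
      intro x hx
      have h1 : HasDerivAt (fun t : ℝ => (B+1) * t₀⁻¹ - (B+1) * t⁻¹) ((B+1) / x ^ 2) x := by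
        have h2 := (hasDerivAt_inv hx.ne').const_mul (B+1)
        have h3 := (hasDerivAt_const x ((B+1) * t₀⁻¹)).sub h2
        refine h3.congr_deriv ?_
        ring
      have := (h1.exp.const_mul (2 * A')).sub_const A'
      exact this.congr_deriv (by ring)
    have hφt₀ : φ t₀ = A' := by
      simp only [hφdef, sub_self, Real.exp_zero]
      ring
    -- right derivatives of y on [t₀, T)
    have hf' : ∀ x ∈ Set.Ico t₀ T,
        HasDerivWithinAt y (derivWithin y (Set.Icc t₀ T) x) (Set.Ici x) x := by
      intro x hx
      have h1 : HasDerivWithinAt y (derivWithin y (Set.Icc t₀ T) x) (Set.Icc t₀ T) x :=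
        (hdiff x (Set.Ico_subset_Icc_self hx)).hasDerivWithinAt
      have h2 := h1.mono (Set.Icc_subset_Icc hx.1 le_rfl)
      exact h2.mono_of_mem_nhdsWithin (Icc_mem_nhdsGE_of_mem ⟨le_rfl, hx.2⟩)
    have hφc : ContinuousOn φ (Set.Icc t₀ T) := fun t ht =>
      (hφd t (lt_of_lt_of_le ht₀0 ht.1)).continuousAt.continuousWithinAt
    have hφ' : ∀ x ∈ Set.Ico t₀ T,
        HasDerivWithinAt φ
          (2 * A' * Real.exp ((B+1) * t₀⁻¹ - (B+1) * x⁻¹) * ((B+1) / x ^ 2)) (Set.Ici x) x :=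
      fun x hx => (hφd x (lt_of_lt_of_le ht₀0 hx.1)).hasDerivWithinAt
    have ha : y t₀ ≤ φ t₀ := by rw [hφt₀]; linarith
    have bound : ∀ x ∈ Set.Ico t₀ T, y x = φ x →
        derivWithin y (Set.Icc t₀ T) x
          < 2 * A' * Real.exp ((B+1) * t₀⁻¹ - (B+1) * x⁻¹) * ((B+1) / x ^ 2) := by
      intro x hx hcontact
      have hxt₀ : t₀ < x := by
        rcases eq_or_lt_of_le hx.1 with h | h
        · exfalso
          rw [← h, hφt₀] at hcontact
          linarith [hy0, hcontact ▸ hy0]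
        · exact h
      have hxT : x < T := hx.2
      have hx0 : (0:ℝ) < x := lt_trans ht₀0 hxt₀
      have hx1 : (1:ℝ) ≤ x := le_trans ht₀ hxt₀.le
      have hx2 : (0:ℝ) < x ^ 2 := by positivity
      have hmem : x ∈ Set.Icc t₀ T := ⟨hxt₀.le, hxT.le⟩
      have hdw : derivWithin y (Set.Icc t₀ T) x = deriv y x :=
        derivWithin_of_mem_nhds (Icc_mem_nhds hxt₀ hxT)
      rw [hdw]
      have hbd := hy' x hmem
      set E := Real.exp ((B+1) * t₀⁻¹ - (B+1) * x⁻¹) with hEdef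
      have hE1 : 1 ≤ E := by
        apply Real.one_le_exp
        have hinv : x⁻¹ ≤ t₀⁻¹ := inv_anti₀ ht₀0 hxt₀.le
        nlinarith
      have hEe : E ≤ Real.exp (B + 1) := by
        apply Real.exp_le_exp.mpr
        have h1 : t₀⁻¹ ≤ 1 := by
          rw [inv_le_one_iff₀]; right; exact ht₀
        have h2 : (0:ℝ) ≤ x⁻¹ := by positivity
        nlinarith
      have hu : A' * E ≤ 1 / 6 := by
        calc A' * E ≤ (1 / (6 * Real.exp (B + 1))) * Real.exp (B + 1) :=
              mul_le_mul hA'le hEe (by positivity) (by positivity)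
          _ = 1 / 6 := by field_simp
      have hyx : y x = 2 * A' * E - A' := hcontact
      have key2 : A + B * (2 * A' * E - A') + (2 * A' * E - A') ^ 2 < 2 * A' * E * (B + 1) := by
        set u := A' * E with hudef
        have hupos : 0 < u := by positivity
        have f1 : A' ≤ u := le_mul_of_one_le_right hA'pos.le hE1
        have f1' : A < u := lt_of_lt_of_le hAlt f1
        have f2 : 0 ≤ B * A' := mul_nonneg hB hA'pos.le
        have f3 : 4 * u ^ 2 ≤ (2/3) * u := by nlinarith
        have f4 : 0 ≤ u * A' := mul_nonneg hupos.le hA'pos.le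
        have f5 : A' ^ 2 ≤ u / 6 := by nlinarith
        nlinarith [f1', f2, f3, f4, f5]
      calc deriv y x ≤ A / x ^ 2 + B / x ^ 2 * y x + (y x) ^ 2 / x ^ 2 := hbd
        _ = (A + B * (2 * A' * E - A') + (2 * A' * E - A') ^ 2) / x ^ 2 := by
            rw [hyx]; ring
        _ < (2 * A' * E * (B + 1)) / x ^ 2 := (div_lt_div_iff_of_pos_right hx2).mpr key2
        _ = 2 * A' * E * ((B + 1) / x ^ 2) := by ring
    have main := image_le_of_deriv_right_lt_deriv_boundary' hy.continuousOn hf' ha hφc hφ' bound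
    intro t ht
    have h1 := main ht
    have hE1 : Real.exp ((B+1) * t₀⁻¹ - (B+1) * t⁻¹) ≤ Real.exp (B + 1) := by
      apply Real.exp_le_exp.mpr
      have h2 : t₀⁻¹ ≤ 1 := by rw [inv_le_one_iff₀]; right; exact ht₀
      have h3 : (0:ℝ) ≤ t⁻¹ := by
        have : (0:ℝ) < t := lt_of_lt_of_le ht₀0 ht.1
        positivity
      nlinarith
    have h2 : φ t ≤ 2 * A' * Real.exp (B + 1) := by
      have h3 := mul_le_mul_of_nonneg_left hE1 (by positivity : (0:ℝ) ≤ 2 * A')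
      simp only [hφdef]
      linarith
    linarith
  -- pass to the limit ε → 0
  intro t ht
  have h2 : y t ≤ 2 * A * Real.exp (B + 1) := by
    refine le_of_forall_pos_le_add ?_
    intro δ hδ
    set ε := min (1 / (4 * (3 * Real.exp (B + 1)))) (δ / (2 * Real.exp (B + 1))) with hεdef
    have hεpos : 0 < ε := lt_min (by positivity) (by positivity)
    have h3 := key ε hεpos (min_le_left _ _) t ht
    have h4 : ε ≤ δ / (2 * Real.exp (B + 1)) := min_le_right _ _
    have h5 : ε * (2 * Real.exp (B + 1)) ≤ δ := (le_div_iff₀ (by positivity)).mp h4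
    nlinarith
  nlinarith
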